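/- arXiv:0809.0744 — 2 statements merged into one kernel-verified Lean document; each statement's English description precedes it below -/
import Mathlib

section
/- Let (X, d) be a finite quasihypermetric space that is not strictly quasihypermetric. Then M(X) < ∞ if and only if there is no signed measure μ of total mass 0 and constant c ≠ 0 with d_μ(x) = c for all x ∈ X. -/
/-!
In `EuclideanSpace ℝ X` the energy is `I(μ) = ⟪D μ, μ⟫` for the symmetric distance operator `D`,
the mass is `⟪𝟙, μ⟫`, and quasihypermetricity says that `D` is negative semidefinite on `𝟙ᗮ`.
Writing a measure of mass one as `σ + x` with `x ∈ 𝟙ᗮ` gives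
`I(σ + x) = I(σ) + 2 ⟪D σ, x⟫ + ⟪D x, x⟫`.
If `D μ = c 𝟙` with `c ≠ 0` and `μ ∈ 𝟙ᗮ`, then `I(σ + t μ) = I(σ) + 2 c t` is unbounded.
Otherwise every `x ∈ 𝟙ᗮ` with `D x ⊥ 𝟙ᗮ` has `D x = 0`, so `⟪D σ, ·⟫` vanishes on the kernel of
the compression `T` of `-D` to `𝟙ᗮ`. Since `T` is positive, its range is `(ker T)ᗮ`, so the linear
term is `2 ⟪T v, x⟫` for some `v`, and `2 ⟪T v, x⟫ - ⟪T x, x⟫ ≤ ⟪T v, v⟫`.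
-/

open Finset
open scoped RealInnerProductSpace

namespace LinearMap

variable {E : Type*} [NormedAddCommGroup E] [InnerProductSpace ℝ E]

theorem IsSymmetric.inner_map_add_add {A : E →ₗ[ℝ] E} (hA : A.IsSymmetric) (x y : E) :
    ⟪A (x + y), x + y⟫ = ⟪A x, x⟫ + 2 * ⟪A x, y⟫ + ⟪A y, y⟫ := by
  rw [map_add, inner_add_left, inner_add_right, inner_add_right, hA y x, real_inner_comm (A x) y]
  ring

theorem IsSymmetric.not_bddAbove_inner_self_of_eq_smul {A : E →ₗ[ℝ] E} (hA : A.IsSymmetric)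
    {u σ μ : E} {c : ℝ} (hσ : ⟪u, σ⟫ = 1) (hμ : ⟪u, μ⟫ = 0) (hc : c ≠ 0) (hAμ : A μ = c • u) :
    ¬ BddAbove {r | ∃ x, ⟪u, x⟫ = 1 ∧ ⟪A x, x⟫ = r} := by
  have hline (t : ℝ) : ⟪A (σ + t • μ), σ + t • μ⟫ = ⟪A σ, σ⟫ + 2 * c * t := by
    rw [hA.inner_map_add_add, hA σ (t • μ), map_smul, hAμ]
    simp only [inner_smul_left, inner_smul_right, real_inner_comm u σ, hσ, hμ]
    ring
  rintro ⟨M, hM⟩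
  have hmem := hM ⟨σ + ((M + 1 - ⟪A σ, σ⟫) / (2 * c)) • μ,
    by rw [inner_add_right, inner_smul_right, hσ, hμ, mul_zero, add_zero], rfl⟩
  rw [hline] at hmem
  field_simp at hmem
  linarith

variable [FiniteDimensional ℝ E]

theorem IsPositive.bddAbove_two_inner_sub {T : E →ₗ[ℝ] E} (hT : T.IsPositive) {ℓ : E}
    (hℓ : ℓ ∈ (ker T)ᗮ) : BddAbove (Set.range fun x => 2 * ⟪ℓ, x⟫ - ⟪T x, x⟫) := by
  rw [orthogonal_ker, hT.adjoint_eq] at hℓ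
  obtain ⟨v, rfl⟩ := hℓ
  refine ⟨⟪T v, v⟫, ?_⟩
  rintro _ ⟨x, rfl⟩
  have h := hT.inner_nonneg_left (x - v)
  have hvx : ⟪T x, v⟫ = ⟪T v, x⟫ := by rw [hT.isSymmetric, real_inner_comm]
  simp only [map_sub, inner_sub_left, inner_sub_right] at h
  linarith

theorem IsSymmetric.bddAbove_image_of_nonpos {A : E →ₗ[ℝ] E} (hA : A.IsSymmetric)
    {K : Submodule ℝ E} (hK : ∀ x ∈ K, ⟪A x, x⟫ ≤ 0) {ℓ : E}
    (hℓ : ∀ x ∈ K, A x ∈ Kᗮ → ⟪ℓ, x⟫ = 0) :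
    BddAbove ((fun x => 2 * ⟪ℓ, x⟫ + ⟪A x, x⟫) '' K) := by
  set T : K →ₗ[ℝ] K := -(K.orthogonalProjectionOnto.toLinearMap ∘ₗ A ∘ₗ K.subtype)
  have hTinner (x y : K) : ⟪T x, y⟫ = -⟪A x, y⟫ := by simp [T]
  have hT : T.IsPositive := by
    refine (isPositive_iff T).2 ⟨fun x y => ?_, fun x => ?_⟩
    · rw [hTinner, real_inner_comm (T y), hTinner, hA, real_inner_comm]
    · rw [hTinner]; linarith [hK x x.2]
  have hℓK : K.orthogonalProjectionOnto ℓ ∈ (ker T)ᗮ := by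
    intro k hk
    have hAk : A k ∈ Kᗮ := by
      rw [← Submodule.orthogonalProjectionOnto_eq_zero_iff, ← neg_eq_zero]
      exact hk
    simp [real_inner_comm, hℓ k k.2 hAk]
  obtain ⟨M, hM⟩ := hT.bddAbove_two_inner_sub hℓK
  refine ⟨M, ?_⟩
  rintro _ ⟨x, hx, rfl⟩
  simpa [hTinner] using hM ⟨⟨x, hx⟩, rfl⟩

theorem IsSymmetric.bddAbove_inner_self_of_forall_eq_smul {A : E →ₗ[ℝ] E} (hA : A.IsSymmetric)
    {u σ : E} (hσ : ⟪u, σ⟫ = 1) (hK : ∀ x ∈ (ℝ ∙ u)ᗮ, ⟪A x, x⟫ ≤ 0)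
    (h : ∀ μ (c : ℝ), ⟪u, μ⟫ = 0 → A μ = c • u → c = 0) :
    BddAbove {r | ∃ x, ⟪u, x⟫ = 1 ∧ ⟪A x, x⟫ = r} := by
  have hℓ : ∀ x ∈ (ℝ ∙ u)ᗮ, A x ∈ (ℝ ∙ u)ᗮᗮ → ⟪A σ, x⟫ = 0 := by
    intro x hx hAx
    rw [Submodule.orthogonal_orthogonal, Submodule.mem_span_singleton] at hAx
    obtain ⟨c, hc⟩ := hAx
    rw [Submodule.mem_orthogonal_singleton_iff_inner_right] at hx
    rw [hA, ← hc, h x c hx hc.symm, zero_smul, inner_zero_right]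
  obtain ⟨M, hM⟩ := hA.bddAbove_image_of_nonpos hK hℓ
  refine ⟨⟪A σ, σ⟫ + M, ?_⟩
  rintro _ ⟨x, hx, rfl⟩
  have hxσ : x - σ ∈ (ℝ ∙ u)ᗮ := by
    rw [Submodule.mem_orthogonal_singleton_iff_inner_right, inner_sub_right, hx, hσ, sub_self]
  have := hM ⟨x - σ, hxσ, rfl⟩
  have hsplit := hA.inner_map_add_add σ (x - σ)
  rw [add_sub_cancel] at hsplit
  dsimp only at this
  linarith

theorem IsSymmetric.bddAbove_inner_self_iff {A : E →ₗ[ℝ] E} (hA : A.IsSymmetric)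
    {u : E} (hu : u ≠ 0) (hK : ∀ x ∈ (ℝ ∙ u)ᗮ, ⟪A x, x⟫ ≤ 0) :
    BddAbove {r | ∃ x, ⟪u, x⟫ = 1 ∧ ⟪A x, x⟫ = r} ↔
      ¬ ∃ (μ : E) (c : ℝ), ⟪u, μ⟫ = 0 ∧ c ≠ 0 ∧ A μ = c • u := by
  have hσ : ⟪u, (‖u‖ ^ 2)⁻¹ • u⟫ = 1 := by
    rw [inner_smul_right, real_inner_self_eq_norm_sq, inv_mul_cancel₀ (by positivity)]
  constructor
  · rintro hbdd ⟨μ, c, hμ, hc, hAμ⟩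
    exact hA.not_bddAbove_inner_self_of_eq_smul hσ hμ hc hAμ hbdd
  · intro h
    refine hA.bddAbove_inner_self_of_forall_eq_smul hσ hK fun μ c hμ hAμ => ?_
    by_contra hc
    exact h ⟨μ, c, hμ, hc, hAμ⟩

end LinearMap

section OnesVec

variable (X : Type*)

def onesVec : EuclideanSpace ℝ X := WithLp.toLp 2 fun _ => 1

variable {X}

theorem inner_onesVec_left [Fintype X] (x : EuclideanSpace ℝ X) : ⟪onesVec X, x⟫ = ∑ i, x i := by
  simp [onesVec, PiLp.inner_apply]

theorem onesVec_ne_zero [Nonempty X] : onesVec X ≠ 0 := by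
  inhabit X
  intro h
  simpa [onesVec] using congrArg (· default) h

end OnesVec

section DistanceOperator

variable (X : Type*) [Fintype X] [MetricSpace X]

noncomputable def distOp : EuclideanSpace ℝ X →ₗ[ℝ] EuclideanSpace ℝ X where
  toFun x := WithLp.toLp 2 fun i => ∑ j, dist i j * x j
  map_add' x y := PiLp.ext fun i => by simp [mul_add, sum_add_distrib]
  map_smul' c x := PiLp.ext fun i => by simp [mul_sum, mul_left_comm]

variable {X}

theorem inner_distOp_left (x y : EuclideanSpace ℝ X) :
    ⟪distOp X x, y⟫ = ∑ i, ∑ j, x i * y j * dist i j := by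
  simp only [distOp, PiLp.inner_apply, LinearMap.coe_mk, AddHom.coe_mk, RCLike.inner_apply,
    conj_trivial, mul_sum]
  rw [sum_comm]
  exact sum_congr rfl fun i _ => sum_congr rfl fun j _ => by rw [dist_comm]; ring

theorem isSymmetric_distOp : (distOp X).IsSymmetric := fun x y => by
  rw [real_inner_comm (distOp X y) x, inner_distOp_left, inner_distOp_left, sum_comm]
  exact sum_congr rfl fun i _ => sum_congr rfl fun j _ => by rw [dist_comm]; ring

theorem distOp_eq_smul_onesVec_iff (μ : EuclideanSpace ℝ X) (c : ℝ) :
    distOp X μ = c • onesVec X ↔ ∀ x, ∑ y, dist x y * μ y = c := by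
  simp [distOp, onesVec, WithLp.ext_iff, funext_iff]

end DistanceOperator

theorem stmt17_general {X : Type*} [Fintype X] [Nonempty X] [MetricSpace X]
    (hq : ∀ α : X → ℝ, ∑ i, α i = 0 → ∑ i, ∑ j, α i * α j * dist i j ≤ 0) :
    BddAbove {r : ℝ | ∃ μ : X → ℝ, ∑ i, μ i = 1 ∧
        ∑ i, ∑ j, μ i * μ j * dist i j = r} ↔
      ¬ ∃ (μ : X → ℝ) (c : ℝ), ∑ i, μ i = 0 ∧ c ≠ 0 ∧ ∀ x, ∑ y, dist x y * μ y = c := by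
  have hneg : ∀ x ∈ (ℝ ∙ onesVec X)ᗮ, ⟪distOp X x, x⟫ ≤ 0 := fun x hx => by
    rw [Submodule.mem_orthogonal_singleton_iff_inner_right, inner_onesVec_left] at hx
    rw [inner_distOp_left]
    exact hq _ hx
  have hE (p : (X → ℝ) → Prop) : (∃ μ, p μ) ↔ ∃ x : EuclideanSpace ℝ X, p x.ofLp :=
    (WithLp.equiv 2 (X → ℝ)).symm.exists_congr_left
  simpa only [hE, inner_onesVec_left, inner_distOp_left, distOp_eq_smul_onesVec_iff] using
    isSymmetric_distOp.bddAbove_inner_self_iff onesVec_ne_zero hneg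

/-- For a finite quasihypermetric space that is not strictly quasihypermetric,
`M(X) < ∞` if and only if there is no mass-zero weight vector whose potential is a
non-zero constant. -/
theorem stmt17 {X : Type*} [Fintype X] [Nonempty X] [MetricSpace X]
    (hq : ∀ α : X → ℝ, ∑ i, α i = 0 → ∑ i, ∑ j, α i * α j * dist i j ≤ 0)
    (hns : ∃ α : X → ℝ, α ≠ 0 ∧ ∑ i, α i = 0 ∧ ∑ i, ∑ j, α i * α j * dist i j = 0) :
    BddAbove {r : ℝ | ∃ μ : X → ℝ, ∑ i, μ i = 1 ∧
        ∑ i, ∑ j, μ i * μ j * dist i j = r} ↔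
      ¬ ∃ (μ : X → ℝ) (c : ℝ), ∑ i, μ i = 0 ∧ c ≠ 0 ∧ ∀ x, ∑ y, dist x y * μ y = c :=
  stmt17_general hq
end

section
/- There exists a 5-point metric space (Z, d) that is quasihypermetric but not strictly quasihypermetric and satisfies M(Z) = ∞. Concretely: Z = {x₁,x₂,y₁,y₂,y₃} with d = 1 within {x₁,x₂}, d = 4/5 within {y₁,y₂,y₃}, and d = 31/60 between the two groups. -/
/-!
On the hyperplane `∑ α = 0` the energy `∑ αᵢ αⱼ d(zᵢ, zⱼ)` of this space is minus a sum of
squares of differences inside each cluster, so it is nonpositive and vanishes on the vector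
`ν = (3, 3, -2, -2, -2)`. Along such an isotropic direction the energy of `μ + t ν` is affine
in `t`, with slope twice the pairing of `μ` and `ν`; for `μ = δ_{x₁}` that slope is `-1/5`, so
the energy is unbounded on the hyperplane `∑ μ = 1`.
-/

open Finset

section Energy

variable {ι : Type*} [Fintype ι] (d : ι → ι → ℝ)

def energy (μ ν : ι → ℝ) : ℝ := ∑ i, ∑ j, μ i * ν j * d i j

theorem energy_add_smul (μ ν : ι → ℝ) (t : ℝ) :
    energy d (μ + t • ν) (μ + t • ν) =
      energy d μ μ + t * (energy d μ ν + energy d ν μ) + t ^ 2 * energy d ν ν := by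
  simp only [energy, mul_add, mul_sum, ← sum_add_distrib]
  refine sum_congr rfl fun i _ => sum_congr rfl fun j _ => ?_
  simp only [Pi.add_apply, Pi.smul_apply, smul_eq_mul]
  ring

theorem not_bddAbove_energy_of_isotropic {μ ν : ι → ℝ} (hμ : ∑ i, μ i = 1) (hν : ∑ i, ν i = 0)
    (hνν : energy d ν ν = 0) (hμν : energy d μ ν + energy d ν μ ≠ 0) :
    ¬ BddAbove {r | ∃ μ : ι → ℝ, ∑ i, μ i = 1 ∧ energy d μ μ = r} := by
  rintro ⟨c, hc⟩
  set s := energy d μ ν + energy d ν μ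
  set t := (c + 1 - energy d μ μ) / s
  have hsum : ∑ i, (μ + t • ν) i = 1 := by
    simp [sum_add_distrib, ← mul_sum, hμ, hν]
  have hval : energy d (μ + t • ν) (μ + t • ν) = c + 1 := by
    have hts : t * s = c + 1 - energy d μ μ := div_mul_cancel₀ _ hμν
    rw [energy_add_smul, hνν]
    linear_combination hts
  linarith [hc ⟨_, hsum, hval⟩]

end Energy

noncomputable def fivePointDist : Fin 5 → Fin 5 → ℝ :=
  ![![0, 1, 31/60, 31/60, 31/60],
    ![1, 0, 31/60, 31/60, 31/60],
    ![31/60, 31/60, 0, 4/5, 4/5],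
    ![31/60, 31/60, 4/5, 0, 4/5],
    ![31/60, 31/60, 4/5, 4/5, 0]]

theorem fivePointDist_self (i : Fin 5) : fivePointDist i i = 0 := by
  fin_cases i <;> rfl

theorem fivePointDist_comm (i j : Fin 5) : fivePointDist i j = fivePointDist j i := by
  fin_cases i <;> fin_cases j <;> rfl

theorem fivePointDist_pos {i j : Fin 5} (h : i ≠ j) : 0 < fivePointDist i j := by
  fin_cases i <;> fin_cases j <;> simp_all [fivePointDist]

theorem fivePointDist_triangle (i j k : Fin 5) :
    fivePointDist i k ≤ fivePointDist i j + fivePointDist j k := by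
  fin_cases i <;> fin_cases j <;> fin_cases k <;> simp [fivePointDist] <;> norm_num

theorem energy_fivePointDist {α : Fin 5 → ℝ} (hα : ∑ i, α i = 0) :
    energy fivePointDist α α = -((α 0 - α 1) ^ 2 / 2 +
      4 / 15 * ((α 2 - α 3) ^ 2 + (α 2 - α 4) ^ 2 + (α 3 - α 4) ^ 2)) := by
  rw [Fin.sum_univ_five] at hα
  have h4 : α 4 = -(α 0 + α 1 + α 2 + α 3) := by linarith
  simp only [energy, Fin.sum_univ_five, fivePointDist, Matrix.cons_val, h4]
  ring

/-- There exists a 5-point metric space that is quasihypermetric but not strictly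
quasihypermetric and has `M(Z) = ∞`: take distances 1 within a 2-point group, 4/5
within a 3-point group, and 31/60 between the groups. -/
theorem stmt18 :
    ∃ d : Fin 5 → Fin 5 → ℝ,
      (∀ i, d i i = 0) ∧ (∀ i j, d i j = d j i) ∧ (∀ i j, i ≠ j → 0 < d i j) ∧
      (∀ i j k, d i k ≤ d i j + d j k) ∧
      (∀ α : Fin 5 → ℝ, ∑ i, α i = 0 → ∑ i, ∑ j, α i * α j * d i j ≤ 0) ∧
      ¬ (∀ α : Fin 5 → ℝ, ∑ i, α i = 0 →
          (∑ i, ∑ j, α i * α j * d i j = 0 → α = 0)) ∧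
      ¬ BddAbove {r : ℝ | ∃ μ : Fin 5 → ℝ, ∑ i, μ i = 1 ∧
          ∑ i, ∑ j, μ i * μ j * d i j = r} := by
  set ν : Fin 5 → ℝ := ![3, 3, -2, -2, -2]
  have hν : ∑ i, ν i = 0 := by simp [ν, Fin.sum_univ_five]; norm_num
  have hνν : energy fivePointDist ν ν = 0 := by
    rw [energy_fivePointDist hν]; simp [ν]
  have hcross :
      energy fivePointDist (Pi.single 0 1) ν + energy fivePointDist ν (Pi.single 0 1) ≠ 0 := by
    simp [energy, Fin.sum_univ_five, fivePointDist, ν]; norm_num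
  refine ⟨fivePointDist, fivePointDist_self, fivePointDist_comm, fun _ _ => fivePointDist_pos,
    fivePointDist_triangle, fun α hα => ?_, fun h => ?_,
    not_bddAbove_energy_of_isotropic _ (by simp) hν hνν hcross⟩
  · change energy fivePointDist α α ≤ 0
    rw [energy_fivePointDist hα, neg_nonpos]
    positivity
  · have hν0 := congrFun (h ν hν hνν) 0
    norm_num [ν] at hν0
end
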